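/- arXiv:2503.14115 — 2 statements merged into one kernel-verified Lean document; each statement's English description precedes it below -/
import Mathlib

section
/- Let T be a trajectory with n vertices and Δ ≥ 0. If there exists a directed path in the free-space graph M_Δ(T, T) from vertex (b, d) to vertex (a, c) with a ≤ b and c ≤ d, then the discrete Fréchet distance between the subtrajectories T[a, b] and T[c, d] is at most Δ. -/
/-!
Since steps never increase a coordinate, every cell of the path lies above its endpoint `(a, c)`.
Translating the path by `(1 - a, 1 - c)` therefore turns it into a discrete walk from
`(b - a + 1, d - c + 1)` to `(1, 1)` which pairs exactly the same points of `T`, so its cost is a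
maximum of distances at free cells, each at most `Δ`.
-/

/-- One step of a discrete walk: each coordinate stays or decreases by one. -/
def Step (p q : ℕ × ℕ) : Prop :=
  (q.1 = p.1 ∨ q.1 + 1 = p.1) ∧ (q.2 = p.2 ∨ q.2 + 1 = p.2)

/-- A discrete walk from `(x, y)` down to `(1, 1)`. -/
def IsWalk (F : List (ℕ × ℕ)) (x y : ℕ) : Prop :=
  F.head? = some (x, y) ∧ F.getLast? = some (1, 1) ∧ List.Chain' Step F

/-- The cost of a discrete walk: maximum pointwise distance along the walk. -/
noncomputable def walkCost (P Q : ℕ → ℝ × ℝ) (F : List (ℕ × ℕ)) : ℝ :=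
  (F.map fun p => dist (P p.1) (Q p.2)).foldr max 0

/-- The discrete Fréchet distance between the sequences `P 1, …, P x` and `Q 1, …, Q y`. -/
noncomputable def dF (P : ℕ → ℝ × ℝ) (x : ℕ) (Q : ℕ → ℝ × ℝ) (y : ℕ) : ℝ :=
  sInf {c | ∃ F, IsWalk F x y ∧ walkCost P Q F = c}

/-- The subtrajectory of `T` starting at index `a`, reindexed from `1`. -/
def subtraj (T : ℕ → ℝ × ℝ) (a : ℕ) : ℕ → ℝ × ℝ := fun i => T (a + i - 1)

/-- A directed path in the free-space graph `M_Δ(T, T)` from `s` to `t`: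
all visited cells are zeroes (distance at most `Δ`) and consecutive cells
differ by a step of the grid graph. -/
def IsFSPath (T : ℕ → ℝ × ℝ) (Δ : ℝ) (F : List (ℕ × ℕ)) (s t : ℕ × ℕ) : Prop :=
  F.head? = some s ∧ F.getLast? = some t ∧ List.Chain' Step F ∧
  ∀ p ∈ F, dist (T p.1) (T p.2) ≤ Δ

lemma Step.le {p q : ℕ × ℕ} (h : Step p q) : q ≤ p := by
  obtain ⟨h1, h2⟩ := h
  exact Prod.mk_le_mk.mpr ⟨by omega, by omega⟩

lemma le_of_mem_of_getLast? {F : List (ℕ × ℕ)} {t : ℕ × ℕ} (hch : List.IsChain Step F)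
    (hlast : F.getLast? = some t) : ∀ p ∈ F, t ≤ p :=
  hch.backwards_induction (t ≤ ·) F (fun _ _ hpq ht => ht.trans hpq.le)
    fun hne => (Option.some_injective _ (List.getLast?_eq_some_getLast hne ▸ hlast)).ge

def reindexFrom (t p : ℕ × ℕ) : ℕ × ℕ := (p.1 - t.1 + 1, p.2 - t.2 + 1)

lemma Step.reindexFrom {t p q : ℕ × ℕ} (ht : t ≤ q) (h : Step p q) :
    Step (reindexFrom t p) (reindexFrom t q) := by
  have htp := ht.trans h.le
  obtain ⟨h1, h2⟩ := h
  rw [Prod.le_def] at ht htp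
  simp only [Step, _root_.reindexFrom]
  omega

lemma isWalk_map_reindexFrom {F : List (ℕ × ℕ)} {s t : ℕ × ℕ} (hhead : F.head? = some s)
    (hlast : F.getLast? = some t) (hch : List.IsChain Step F) :
    IsWalk (F.map (reindexFrom t)) (s.1 - t.1 + 1) (s.2 - t.2 + 1) := by
  refine ⟨by simp [hhead, reindexFrom], by simp [hlast, reindexFrom], ?_⟩
  have hle := le_of_mem_of_getLast? hch hlast
  exact (List.isChain_map _).mpr <|
    (List.IsChain.iff_mem.mp hch).imp fun _ q ⟨_, hq, hpq⟩ => hpq.reindexFrom (hle q hq)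

lemma subtraj_sub_add_one (T : ℕ → ℝ × ℝ) {a i : ℕ} (h : a ≤ i) :
    subtraj T a (i - a + 1) = T i := by
  simp only [subtraj]
  congr 1
  omega

lemma walkCost_nonneg (P Q : ℕ → ℝ × ℝ) (F : List (ℕ × ℕ)) : 0 ≤ walkCost P Q F := by
  induction F with
  | nil => exact le_rfl
  | cons p F ih => exact ih.trans (le_max_right _ _)

lemma walkCost_le {P Q : ℕ → ℝ × ℝ} {F : List (ℕ × ℕ)} {Δ : ℝ} (hΔ : 0 ≤ Δ)
    (h : ∀ p ∈ F, dist (P p.1) (Q p.2) ≤ Δ) : walkCost P Q F ≤ Δ := by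
  induction F with
  | nil => exact hΔ
  | cons p F ih =>
    exact max_le (h p List.mem_cons_self) (ih fun q hq => h q (List.mem_cons_of_mem _ hq))

lemma dF_le_walkCost (P Q : ℕ → ℝ × ℝ) {F : List (ℕ × ℕ)} {x y : ℕ} (hF : IsWalk F x y) :
    dF P x Q y ≤ walkCost P Q F :=
  csInf_le ⟨0, by rintro _ ⟨G, -, rfl⟩; exact walkCost_nonneg P Q G⟩ ⟨F, hF, rfl⟩

theorem path_imp_frechet_le_general (T : ℕ → ℝ × ℝ) (Δ : ℝ) (hΔ : 0 ≤ Δ)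
    (a b c d : ℕ)
    (F : List (ℕ × ℕ)) (hF : IsFSPath T Δ F (b, d) (a, c)) :
    dF (subtraj T a) (b - a + 1) (subtraj T c) (d - c + 1) ≤ Δ := by
  obtain ⟨hhead, hlast, hch, hfree⟩ := hF
  have hle := le_of_mem_of_getLast? hch hlast
  calc dF (subtraj T a) (b - a + 1) (subtraj T c) (d - c + 1)
      ≤ walkCost (subtraj T a) (subtraj T c) (F.map (reindexFrom (a, c))) :=
        dF_le_walkCost _ _ (isWalk_map_reindexFrom hhead hlast hch)
    _ ≤ Δ := walkCost_le hΔ <| List.forall_mem_map.mpr fun p hp => by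
        obtain ⟨h1, h2⟩ := Prod.le_def.mp (hle p hp)
        rw [reindexFrom, subtraj_sub_add_one T h1, subtraj_sub_add_one T h2]
        exact hfree p hp

/-- if there is a directed path in the free-space graph M_Δ(T,T) from (b,d)
to (a,c), then the discrete Fréchet distance between T[a,b] and T[c,d] is at most Δ. -/
theorem path_imp_frechet_le (T : ℕ → ℝ × ℝ) (n : ℕ) (Δ : ℝ) (hΔ : 0 ≤ Δ)
    (a b c d : ℕ) (ha : 1 ≤ a) (hab : a ≤ b) (hb : b ≤ n)
    (hc : 1 ≤ c) (hcd : c ≤ d) (hd : d ≤ n)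
    (F : List (ℕ × ℕ)) (hF : IsFSPath T Δ F (b, d) (a, c)) :
    dF (subtraj T a) (b - a + 1) (subtraj T c) (d - c + 1) ≤ Δ :=
  path_imp_frechet_le_general T Δ hΔ a b c d F hF
end

section
/- Conversely, let T be a trajectory with n vertices and Δ ≥ 0, and let a ≤ b, c ≤ d be indices in [n]. If the discrete Fréchet distance between T[a,b] and T[c,d] is at most Δ, then there is a directed path in the free-space graph M_Δ(T, T) from (b, d) to (a, c). -/
theorem List.foldr_max_mem_cons {α : Type*} [LinearOrder α] (b : α) (l : List α) :
    l.foldr max b ∈ b :: l := by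
  induction l with
  | nil => exact List.mem_cons_self
  | cons y l ih =>
    rw [List.foldr_cons]
    rcases max_choice y (l.foldr max b) with h | h <;> rw [h]
    · exact List.mem_cons_of_mem _ List.mem_cons_self
    · exact (List.Sublist.cons_cons _ (List.sublist_cons_self y l)).subset ih

namespace IsWalk

variable {F : List (ℕ × ℕ)} {x y : ℕ}

lemma le_of_mem (hF : IsWalk F x y) {p : ℕ × ℕ} (hp : p ∈ F) : p ≤ (x, y) := by
  obtain ⟨hhead, -, hchain⟩ := hF
  obtain ⟨l, rfl⟩ : ∃ l, F = (x, y) :: l := by cases F <;> simp_all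
  rcases List.mem_cons.1 hp with rfl | hp
  · exact le_rfl
  · exact (hchain.imp fun _ _ h => (Step.le h).ge).rel_cons hp

lemma cons (hF : IsWalk F x y) {p : ℕ × ℕ} (hp : Step p (x, y)) : IsWalk (p :: F) p.1 p.2 := by
  obtain ⟨hhead, hlast, hchain⟩ := hF
  obtain ⟨l, rfl⟩ : ∃ l, F = (x, y) :: l := by cases F <;> simp_all
  exact ⟨rfl, by simpa [List.getLast?_cons_cons] using hlast, List.IsChain.cons_cons hp hchain⟩

end IsWalk

lemma exists_isWalk {x y : ℕ} (hx : 1 ≤ x) (hy : 1 ≤ y) : ∃ F, IsWalk F x y := by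
  induction x, hx using Nat.le_induction with
  | base =>
    induction y, hy using Nat.le_induction with
    | base => exact ⟨[(1, 1)], rfl, rfl, List.isChain_singleton _⟩
    | succ y _ ih =>
      obtain ⟨F, hF⟩ := ih
      exact ⟨_, hF.cons (p := (1, y + 1)) ⟨Or.inl rfl, Or.inr rfl⟩⟩
  | succ x _ ih =>
    obtain ⟨F, hF⟩ := ih
    exact ⟨_, hF.cons (p := (x + 1, y)) ⟨Or.inr rfl, Or.inl rfl⟩⟩

section walkCost

variable (P Q : ℕ → ℝ × ℝ)

lemma dist_le_walkCost {F : List (ℕ × ℕ)} {p : ℕ × ℕ} (hp : p ∈ F) :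
    dist (P p.1) (Q p.2) ≤ walkCost P Q F :=
  List.le_max_of_le' 0 (List.mem_map_of_mem hp) le_rfl

lemma walkCost_mem (F : List (ℕ × ℕ)) :
    walkCost P Q F ∈ insert 0 ((fun p => dist (P p.1) (Q p.2)) '' {p | p ∈ F}) := by
  simpa [walkCost] using List.foldr_max_mem_cons 0 (F.map fun p => dist (P p.1) (Q p.2))

lemma finite_walkCosts (x y : ℕ) : {c | ∃ F, IsWalk F x y ∧ walkCost P Q F = c}.Finite := by
  refine (((Set.finite_Iic (x, y)).image fun p => dist (P p.1) (Q p.2)).insert 0).subset ?_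
  rintro _ ⟨F, hF, rfl⟩
  exact Set.insert_subset_insert (Set.image_mono fun p hp => hF.le_of_mem hp) (walkCost_mem P Q F)

lemma exists_isWalk_walkCost_eq_dF {x y : ℕ} (hx : 1 ≤ x) (hy : 1 ≤ y) :
    ∃ F, IsWalk F x y ∧ walkCost P Q F = dF P x Q y := by
  obtain ⟨F, hF⟩ := exists_isWalk hx hy
  exact Set.Nonempty.csInf_mem (s := {c | ∃ F, IsWalk F x y ∧ walkCost P Q F = c})
    ⟨_, F, hF, rfl⟩ (finite_walkCosts P Q x y)

end walkCost

lemma IsWalk.isFSPath_map {T : ℕ → ℝ × ℝ} {Δ : ℝ} {F : List (ℕ × ℕ)} {x y a c : ℕ}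
    (hF : IsWalk F x y) (ha : 1 ≤ a) (hc : 1 ≤ c)
    (hcost : walkCost (subtraj T a) (subtraj T c) F ≤ Δ) :
    IsFSPath T Δ (F.map fun p => (a + p.1 - 1, c + p.2 - 1)) (a + x - 1, c + y - 1) (a, c) := by
  obtain ⟨hhead, hlast, hchain⟩ := hF
  refine ⟨by simp [hhead], by simp [hlast], ?_, ?_⟩
  · refine List.isChain_map_of_isChain _ (fun p q ⟨h1, h2⟩ => ⟨?_, ?_⟩) hchain <;> omega
  · simp only [List.mem_map, forall_exists_index, and_imp]
    rintro _ p hp rfl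
    exact (dist_le_walkCost _ _ hp).trans hcost

theorem frechet_le_imp_path_general (T : ℕ → ℝ × ℝ) (Δ : ℝ)
    (a b c d : ℕ) (ha : 1 ≤ a) (hab : a ≤ b)
    (hc : 1 ≤ c) (hcd : c ≤ d)
    (h : dF (subtraj T a) (b - a + 1) (subtraj T c) (d - c + 1) ≤ Δ) :
    ∃ F, IsFSPath T Δ F (b, d) (a, c) := by
  obtain ⟨F, hF, hcost⟩ :=
    exists_isWalk_walkCost_eq_dF (subtraj T a) (subtraj T c) (Nat.le_add_left 1 (b - a))
      (Nat.le_add_left 1 (d - c))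
  have hpath := hF.isFSPath_map ha hc (hcost ▸ h)
  rw [show a + (b - a + 1) - 1 = b by omega, show c + (d - c + 1) - 1 = d by omega] at hpath
  exact ⟨_, hpath⟩

/-- conversely, if the discrete Fréchet distance between T[a,b] and T[c,d]
is at most Δ, then there is a directed path in the free-space graph M_Δ(T,T) from (b,d)
to (a,c). -/
theorem frechet_le_imp_path (T : ℕ → ℝ × ℝ) (n : ℕ) (Δ : ℝ) (hΔ : 0 ≤ Δ)
    (a b c d : ℕ) (ha : 1 ≤ a) (hab : a ≤ b) (hb : b ≤ n)
    (hc : 1 ≤ c) (hcd : c ≤ d) (hd : d ≤ n)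
    (h : dF (subtraj T a) (b - a + 1) (subtraj T c) (d - c + 1) ≤ Δ) :
    ∃ F, IsFSPath T Δ F (b, d) (a, c) :=
  frechet_le_imp_path_general T Δ a b c d ha hab hc hcd h
end
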